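/- Assume each displacement map X ↦ x_{i'}−x_i belongs to L²(ρ_X). Then the adjoint A*: L²(ρ_X) → ∏_{p,q} H_{K^{pq}} of the bounded operator Aφ = F_φ is given, for g = (g₁,…,g_N) ∈ L²(ρ_X), by the Bochner integrals (A*g)^{pq} = ∫ (1/N²) Σ_{i∈I_p} Σ_{i'∈I_q, i'≠i} K^{pq}_{r_{ii'}} ⟨𝐫_{ii'}, g_i(X)⟩ dρ_X(X) ∈ H_{K^{pq}}, for each (p,q) ∈ {1,2}². -/

import Mathlib

open MeasureTheory
open scoped BigOperators ENNReal RealInnerProductSpace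

set_option synthInstance.maxHeartbeats 1000000
set_option maxHeartbeats 1000000

noncomputable section

/-- configuration space of `N` agents in `ℝ^d` -/
abbrev Conf (d N : ℕ) : Type := Fin N → EuclideanSpace ℝ (Fin d)

/-- the configuration space viewed as the Hilbert space `ℝ^{dN}` -/
abbrev EConf (d N : ℕ) : Type := PiLp 2 (fun _ : Fin N => EuclideanSpace ℝ (Fin d))

/-- species of agent `i`: `0` if `i < N₁`, `1` otherwise -/
def typeOf (N1 : ℕ) {N : ℕ} (i : Fin N) : Fin 2 := if (i : ℕ) < N1 then 0 else 1

/-- two-species force field `F_φ` for a kernel family `φ = (φ^{pq})` -/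
def forceField {d N : ℕ} (N1 : ℕ) (ψ : Fin 2 → Fin 2 → ℝ → ℝ) (X : Conf d N) :
    Conf d N :=
  fun i => (N : ℝ)⁻¹ • ∑ i' : Fin N,
    ψ (typeOf N1 i) (typeOf N1 i') (‖X i' - X i‖) • (X i' - X i)

/-- function represented by an RKHS element, `φ^{pq}(r) = ⟪φ^{pq}, K^{pq}_r⟫` -/
def rkhsFun {H : Fin 2 → Fin 2 → Type*} [∀ p q, NormedAddCommGroup (H p q)]
    [∀ p q, InnerProductSpace ℝ (H p q)] (k : ∀ p q, ℝ → H p q)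
    (φ : ∀ p q, H p q) : Fin 2 → Fin 2 → ℝ → ℝ :=
  fun p q r => ⟪φ p q, k p q r⟫


/-- finite `PiLp`-products of complete spaces are complete -/
instance piLpProdComplete (H : Fin 2 → Fin 2 → Type*) [∀ p q, NormedAddCommGroup (H p q)]
    [∀ p q, CompleteSpace (H p q)] :
    CompleteSpace (PiLp 2 fun pq : Fin 2 × Fin 2 => H pq.1 pq.2) :=
  inferInstance

/-! For `φ` in the product RKHS, the reproducing property `φ^{pq}(r) = ⟪φ^{pq}, K^{pq}_r⟫`
rewrites `⟪g(X), F_φ(X)⟫` pointwise as `N ⟪φ, S(X, g(X))⟫`, where `S` is the integrand of the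
claimed formula. Integrating against `ρ_X / N` and moving `φ` out of the Bochner integral gives
`⟪g, Aφ⟫ = ⟪∫ S, φ⟫`. The integrand is Bochner integrable because `r ↦ K_r` is continuous, hence
bounded, on `[0, R]`, and `|⟪𝐫_{ii'}, g_i⟫| ≤ R ‖g(X)‖` with `g ∈ L² ⊆ L¹`. -/

theorem continuousOn_of_continuousOn_inner {α H : Type*} [TopologicalSpace α]
    [NormedAddCommGroup H] [InnerProductSpace ℝ H] {k : α → H} {s : Set α}
    (hK : ContinuousOn (fun xy : α × α => ⟪k xy.1, k xy.2⟫) (s ×ˢ s)) :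
    ContinuousOn k s := by
  intro x₀ hx₀
  have hK_at {f : α → α × α} (hf : Continuous f) (hfs : Set.MapsTo f s (s ×ˢ s)) :
      Filter.Tendsto (fun x => ⟪k (f x).1, k (f x).2⟫) (nhdsWithin x₀ s)
        (nhds ⟪k (f x₀).1, k (f x₀).2⟫) :=
    (hK (f x₀) (hfs hx₀)).comp hf.continuousWithinAt hfs
  have hdiag := hK_at (f := fun x => (x, x)) (by fun_prop) fun _ hx => ⟨hx, hx⟩
  have hrow := hK_at (f := fun x => (x, x₀)) (by fun_prop) fun _ hx => ⟨hx, hx₀⟩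
  -- `‖k x - k x₀‖² = K(x,x) - 2 K(x,x₀) + K(x₀,x₀)`, which tends to `0`
  have hsq : Filter.Tendsto (fun x => ‖k x - k x₀‖ ^ 2) (nhdsWithin x₀ s) (nhds 0) := by
    have h := (hdiag.sub (hrow.const_mul 2)).add_const ⟪k x₀, k x₀⟫
    simp only [← real_inner_self_eq_norm_sq, real_inner_sub_sub_self]
    convert h using 2
    ring
  rw [ContinuousWithinAt, tendsto_iff_norm_sub_tendsto_zero]
  simpa [Real.sqrt_sq (norm_nonneg _)] using hsq.sqrt

theorem MeasureTheory.Integrable.inner_smul_comp_norm {Ω E F : Type*} [MeasurableSpace Ω]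
    {μ : Measure Ω} [NormedAddCommGroup E] [InnerProductSpace ℝ E] [NormedAddCommGroup F]
    [NormedSpace ℝ F] {R : ℝ} (hR : 0 ≤ R) {k : ℝ → F}
    (hk : ContinuousOn k (Set.Icc 0 R)) {x u : Ω → E} (hx : AEStronglyMeasurable x μ)
    (hxR : ∀ᵐ ω ∂μ, ‖x ω‖ ≤ R) (hu : Integrable u μ) :
    Integrable (fun ω => ⟪x ω, u ω⟫ • k ‖x ω‖) μ := by
  obtain ⟨C, hC⟩ := isCompact_Icc.exists_bound_of_continuousOn hk
  have hmem : ∀ᵐ ω ∂μ, ‖x ω‖ ∈ Set.Icc 0 R := hxR.mono fun ω h => ⟨norm_nonneg _, h⟩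
  -- `k` need not be measurable off `[0, R]`; replace it by its constant extension
  have hk_ext : AEStronglyMeasurable (fun ω => k ‖x ω‖) μ := by
    refine (hk.domRestrict.Icc_extend' (h := hR)).comp_aestronglyMeasurable hx.norm
      |>.congr ?_
    filter_upwards [hmem] with ω hω
    exact Set.IccExtend_of_mem hR _ hω
  refine (hu.norm.const_mul (R * C)).mono' ((hx.inner hu.1).smul hk_ext) ?_
  filter_upwards [hmem] with ω hω
  calc ‖⟪x ω, u ω⟫ • k ‖x ω‖‖ = |⟪x ω, u ω⟫| * ‖k ‖x ω‖‖ := by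
        rw [norm_smul, Real.norm_eq_abs]
    _ ≤ (‖x ω‖ * ‖u ω‖) * C := by
        gcongr
        · exact abs_real_inner_le_norm _ _
        · exact hC _ hω
    _ ≤ (R * ‖u ω‖) * C := by
        gcongr
        · exact (norm_nonneg _).trans (hC _ hω)
        · exact hω.2
    _ = R * C * ‖u ω‖ := by ring

theorem PiLp.inner_toLp_integral {Ω ι : Type*} [MeasurableSpace Ω] {μ : Measure Ω} [Fintype ι]
    {E : ι → Type*} [∀ i, NormedAddCommGroup (E i)] [∀ i, InnerProductSpace ℝ (E i)]
    [∀ i, CompleteSpace (E i)] {f : Ω → ∀ i, E i} (hf : ∀ i, Integrable (fun ω => f ω i) μ)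
    (φ : PiLp 2 E) :
    ⟪WithLp.toLp 2 (fun i => ∫ ω, f ω i ∂μ), φ⟫ = ∫ ω, ⟪WithLp.toLp 2 (f ω), φ⟫ ∂μ := by
  simp only [PiLp.inner_apply]
  rw [integral_finsetSum _ fun i _ => (hf i).inner_const _]
  refine Finset.sum_congr rfl fun i _ => ?_
  rw [real_inner_comm, ← integral_inner (hf i)]
  simp only [real_inner_comm]

theorem inner_toLp_forceField {d N : ℕ} (N1 : ℕ) (ψ : Fin 2 → Fin 2 → ℝ → ℝ) (X : Conf d N)
    (v : EConf d N) :
    ⟪v, WithLp.toLp 2 (forceField N1 ψ X)⟫ = (N : ℝ)⁻¹ * ∑ i : Fin N, ∑ i' : Fin N,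
      ⟪X i' - X i, v i⟫ * ψ (typeOf N1 i) (typeOf N1 i') ‖X i' - X i‖ := by
  rw [PiLp.inner_apply, Finset.mul_sum]
  refine Finset.sum_congr rfl fun i _ => ?_
  simp only [forceField, inner_smul_right, inner_sum, Finset.mul_sum]
  refine Finset.sum_congr rfl fun i' _ => ?_
  rw [real_inner_comm (v i)]
  ring

section AdjointIntegrand

variable {H : Fin 2 → Fin 2 → Type*} [∀ p q, NormedAddCommGroup (H p q)]
  [∀ p q, InnerProductSpace ℝ (H p q)]

/-- The integrand of `(A* g)^{pq}` at the configuration `X`, with `v = g(X)`. -/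
def adjointIntegrand {d N : ℕ} (N1 : ℕ) (k : ∀ p q, ℝ → H p q) (X v : Conf d N)
    (pq : Fin 2 × Fin 2) : H pq.1 pq.2 :=
  ((N : ℝ) ^ 2)⁻¹ • ∑ i : Fin N, ∑ i' : Fin N,
    if typeOf N1 i = pq.1 ∧ typeOf N1 i' = pq.2 ∧ i' ≠ i then
      ⟪X i' - X i, v i⟫ • k pq.1 pq.2 ‖X i' - X i‖
    else 0

theorem inner_toLp_adjointIntegrand {d N : ℕ} (N1 : ℕ) (k : ∀ p q, ℝ → H p q) (X v : Conf d N)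
    (φ : PiLp 2 fun pq : Fin 2 × Fin 2 => H pq.1 pq.2) :
    ⟪WithLp.toLp 2 (adjointIntegrand N1 k X v), φ⟫ = ((N : ℝ) ^ 2)⁻¹ * ∑ i : Fin N, ∑ i' : Fin N,
      ⟪X i' - X i, v i⟫ * rkhsFun k (fun p q => φ (p, q)) (typeOf N1 i) (typeOf N1 i')
        ‖X i' - X i‖ := by
  rw [PiLp.inner_apply]
  simp only [adjointIntegrand, inner_smul_left, sum_inner, RCLike.conj_to_real, ← Finset.mul_sum]
  rw [Finset.sum_comm]
  refine congrArg _ (Finset.sum_congr rfl fun i _ => ?_)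
  rw [Finset.sum_comm]
  refine Finset.sum_congr rfl fun i' _ => ?_
  rcases eq_or_ne i' i with rfl | hi
  · simp -- the diagonal terms vanish since `𝐫_{ii} = 0`
  -- only the pair of species `(typeOf N1 i, typeOf N1 i')` contributes
  rw [Finset.sum_eq_single (typeOf N1 i, typeOf N1 i')]
  · rw [if_pos ⟨rfl, rfl, hi⟩, real_inner_smul_left, rkhsFun, real_inner_comm (k _ _ _)]
  · rintro pq - hpq
    rw [if_neg, inner_zero_left]
    rintro ⟨h1, h2, -⟩
    exact hpq (Prod.ext h1.symm h2.symm)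
  · simp

theorem inner_toLp_forceField_rkhsFun {d N : ℕ} (hN : (N : ℝ) ≠ 0) (N1 : ℕ)
    (k : ∀ p q, ℝ → H p q)
    (φ : PiLp 2 fun pq : Fin 2 × Fin 2 => H pq.1 pq.2) (X : Conf d N) (v : EConf d N) :
    ⟪v, WithLp.toLp 2 (forceField N1 (rkhsFun k fun p q => φ (p, q)) X)⟫ =
      N * ⟪WithLp.toLp 2 (adjointIntegrand N1 k X v.ofLp), φ⟫ := by
  rw [inner_toLp_forceField, inner_toLp_adjointIntegrand]
  field_simp

theorem integrable_adjointIntegrand {d N : ℕ} (N1 : ℕ) {R : ℝ} (hR : 0 ≤ R)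
    {k : ∀ p q, ℝ → H p q} (hk : ∀ p q, ContinuousOn (k p q) (Set.Icc 0 R))
    {μ : Measure (Conf d N)} (hsupp : ∀ᵐ X ∂μ, ∀ i i' : Fin N, ‖X i' - X i‖ ≤ R)
    {g : Conf d N → EConf d N} (hg : Integrable g μ) (pq : Fin 2 × Fin 2) :
    Integrable (fun X => adjointIntegrand N1 k X (g X).ofLp pq) μ := by
  refine Integrable.smul _ (integrable_finsetSum _ fun i _ => integrable_finsetSum _ fun i' _ => ?_)
  by_cases hpair : typeOf N1 i = pq.1 ∧ typeOf N1 i' = pq.2 ∧ i' ≠ i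
  · simp only [if_pos hpair]
    have hgi : Integrable (fun X => (g X).ofLp i) μ :=
      (PiLp.proj 2 (𝕜 := ℝ) (fun _ : Fin N => EuclideanSpace ℝ (Fin d)) i).integrable_comp hg
    have hdisp : Continuous fun X : Conf d N => X i' - X i := by fun_prop
    exact hgi.inner_smul_comp_norm hR (hk _ _) hdisp.aestronglyMeasurable
      (hsupp.mono fun X hX => hX i i')
  · simp only [if_neg hpair]
    exact integrable_zero _ _ _

end AdjointIntegrand

theorem forceOperator_adjoint_general
    (d N1 N2 : ℕ) (hN1 : 0 < N1)
    (R : ℝ) (hR : 0 < R)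
    (ρX : Measure (Conf d (N1 + N2))) [IsProbabilityMeasure ρX]
    (hsupp : ∀ᵐ X ∂ρX, ∀ i i' : Fin (N1 + N2), ‖X i' - X i‖ ≤ R)
    (H : Fin 2 → Fin 2 → Type*) [∀ p q, NormedAddCommGroup (H p q)]
    [∀ p q, InnerProductSpace ℝ (H p q)] [∀ p q, CompleteSpace (H p q)]
    (k : ∀ p q, ℝ → H p q)
    (hK_cont : ∀ p q, ContinuousOn (fun rr : ℝ × ℝ => (⟪k p q rr.1, k p q rr.2⟫ : ℝ))
      (Set.Icc 0 R ×ˢ Set.Icc 0 R))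
    -- `A` is the bounded operator with `Aφ = F_φ`
    (A : (PiLp 2 fun pq : Fin 2 × Fin 2 => H pq.1 pq.2) →L[ℝ]
        (Lp (EConf d (N1 + N2)) 2 (((N1 + N2 : ℕ) : ℝ≥0∞)⁻¹ • ρX)))
    (hA : ∀ φ : PiLp 2 fun pq : Fin 2 × Fin 2 => H pq.1 pq.2,
      ∀ᵐ X ∂(((N1 + N2 : ℕ) : ℝ≥0∞)⁻¹ • ρX),
        (A φ) X = (WithLp.toLp 2 (forceField N1 (rkhsFun k (fun p q => φ (p, q))) X) : EConf d (N1 + N2))) :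
    ∀ g : Lp (EConf d (N1 + N2)) 2 (((N1 + N2 : ℕ) : ℝ≥0∞)⁻¹ • ρX),
      ContinuousLinearMap.adjoint A g =
        (WithLp.toLp 2 (fun pq : Fin 2 × Fin 2 =>
          ∫ X, ((((N1 + N2 : ℕ) : ℝ) ^ 2)⁻¹ •
            ∑ i : Fin (N1 + N2), ∑ i' : Fin (N1 + N2),
              (if typeOf N1 i = pq.1 ∧ typeOf N1 i' = pq.2 ∧ i' ≠ i then
                (⟪X i' - X i, (g X : Conf d (N1 + N2)) i⟫ : ℝ) •
                  k pq.1 pq.2 (‖X i' - X i‖)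
              else 0)) ∂ρX) :
          PiLp 2 fun pq : Fin 2 × Fin 2 => H pq.1 pq.2) := by
  intro g
  have hN0 : N1 + N2 ≠ 0 := (Nat.add_pos_left hN1 N2).ne'
  have hN : ((N1 + N2 : ℕ) : ℝ) ≠ 0 := Nat.cast_ne_zero.2 hN0
  have hg : Integrable (fun X => g X) ρX := by
    have hρ : ρX = ((N1 + N2 : ℕ) : ℝ≥0∞) • (((N1 + N2 : ℕ) : ℝ≥0∞)⁻¹ • ρX) := by
      rw [smul_smul, ENNReal.mul_inv_cancel (Nat.cast_ne_zero.2 hN0) (ENNReal.natCast_ne_top _),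
        one_smul]
    have hgρ := (Lp.memLp g).smul_measure (ENNReal.natCast_ne_top (N1 + N2))
    rw [← hρ] at hgρ
    exact hgρ.integrable one_le_two
  have hk p q := continuousOn_of_continuousOn_inner (hK_cont p q)
  refine ext_inner_right ℝ fun φ => ?_
  calc ⟪ContinuousLinearMap.adjoint A g, φ⟫
      = ((N1 + N2 : ℕ) : ℝ)⁻¹ * ∫ X, ⟪g X,
          WithLp.toLp 2 (forceField N1 (rkhsFun k fun p q => φ (p, q)) X)⟫ ∂ρX := by
        rw [ContinuousLinearMap.adjoint_inner_left, L2.inner_def,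
          integral_congr_ae ((hA φ).mono fun X hX => congrArg (⟪g X, ·⟫) hX),
          integral_smul_measure, ENNReal.toReal_inv, ENNReal.toReal_natCast, smul_eq_mul]
    _ = ∫ X, ⟪WithLp.toLp 2 (adjointIntegrand N1 k X (g X).ofLp), φ⟫ ∂ρX := by
        simp only [inner_toLp_forceField_rkhsFun hN, integral_const_mul, inv_mul_cancel_left₀ hN]
    _ = _ := (PiLp.inner_toLp_integral (integrable_adjointIntegrand N1 hR.le hk hsupp hg) φ).symm

/-- Assume each displacement map `X ↦ x_{i'} − x_i` belongs to `L²(ρ_X)`.  Then the adjoint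
`A* : L²(ρ_X) → ∏_{p,q} H_{K^{pq}}` of the bounded operator `Aφ = F_φ` is given, for
`g = (g₁,…,g_N) ∈ L²(ρ_X)`, by the Bochner integrals
`(A*g)^{pq} = ∫ (1/N²) ∑_{i ∈ I_p} ∑_{i' ∈ I_q, i' ≠ i} K^{pq}_{r_{ii'}}
  ⟪𝐫_{ii'}, g_i(X)⟫ dρ_X(X) ∈ H_{K^{pq}}`. -/
theorem forceOperator_adjoint
    (d N1 N2 : ℕ) (hd : 0 < d) (hN1 : 0 < N1) (hN2 : 0 < N2)
    (R : ℝ) (hR : 0 < R)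
    (ρX : Measure (Conf d (N1 + N2))) [IsProbabilityMeasure ρX]
    (hsupp : ∀ᵐ X ∂ρX, ∀ i i' : Fin (N1 + N2), ‖X i' - X i‖ ≤ R)
    -- each displacement map `X ↦ x_{i'} − x_i` lies in `L²(ρ_X)`
    (hdisp : ∀ i i' : Fin (N1 + N2),
      MemLp (fun X : Conf d (N1 + N2) => X i' - X i) 2 ρX)
    (H : Fin 2 → Fin 2 → Type*) [∀ p q, NormedAddCommGroup (H p q)]
    [∀ p q, InnerProductSpace ℝ (H p q)] [∀ p q, CompleteSpace (H p q)]
    (k : ∀ p q, ℝ → H p q)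
    (hK_cont : ∀ p q, ContinuousOn (fun rr : ℝ × ℝ => (⟪k p q rr.1, k p q rr.2⟫ : ℝ))
      (Set.Icc 0 R ×ˢ Set.Icc 0 R))
    (κ : Fin 2 → Fin 2 → ℝ) (hκ0 : ∀ p q, 0 ≤ κ p q)
    (hκ : ∀ p q, IsLUB ((fun r => (⟪k p q r, k p q r⟫ : ℝ)) '' Set.Icc 0 R) ((κ p q) ^ 2))
    -- `A` is the bounded operator with `Aφ = F_φ`
    (A : (PiLp 2 fun pq : Fin 2 × Fin 2 => H pq.1 pq.2) →L[ℝ]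
        (Lp (EConf d (N1 + N2)) 2 (((N1 + N2 : ℕ) : ℝ≥0∞)⁻¹ • ρX)))
    (hA : ∀ φ : PiLp 2 fun pq : Fin 2 × Fin 2 => H pq.1 pq.2,
      ∀ᵐ X ∂(((N1 + N2 : ℕ) : ℝ≥0∞)⁻¹ • ρX),
        (A φ) X = (WithLp.toLp 2 (forceField N1 (rkhsFun k (fun p q => φ (p, q))) X) : EConf d (N1 + N2))) :
    ∀ g : Lp (EConf d (N1 + N2)) 2 (((N1 + N2 : ℕ) : ℝ≥0∞)⁻¹ • ρX),
      ContinuousLinearMap.adjoint A g =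
        (WithLp.toLp 2 (fun pq : Fin 2 × Fin 2 =>
          ∫ X, ((((N1 + N2 : ℕ) : ℝ) ^ 2)⁻¹ •
            ∑ i : Fin (N1 + N2), ∑ i' : Fin (N1 + N2),
              (if typeOf N1 i = pq.1 ∧ typeOf N1 i' = pq.2 ∧ i' ≠ i then
                (⟪X i' - X i, (g X : Conf d (N1 + N2)) i⟫ : ℝ) •
                  k pq.1 pq.2 (‖X i' - X i‖)
              else 0)) ∂ρX) :
          PiLp 2 fun pq : Fin 2 × Fin 2 => H pq.1 pq.2) :=
  forceOperator_adjoint_general d N1 N2 hN1 R hR ρX hsupp H k hK_cont A hA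

end
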